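/- Let λ, d > 0 and let g be the GG(λ, λ, d) density (i.e., the gamma-gamma density with c = λ). Then ∫₀^d g(Ψ) dΨ = 1/2; that is, the median of the GG(λ, c, d) distribution equals d whenever λ = c. -/

import Mathlib

open MeasureTheory Real Filter Set

/-- The gamma-gamma `GG(l, c, d)` density. -/
noncomputable def ggPDF (l c d Ψ : ℝ) : ℝ :=
  (1 / d) ^ l * (Real.Gamma (l + c) / (Real.Gamma l * Real.Gamma c)) *
    Ψ ^ (l - 1) * (1 + Ψ / d) ^ (-(l + c))

/-!
The substitution `Ψ = d x / (1 - x)` turns `∫₀ᵗ g` into the incomplete beta integral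
`∫₀^{t/(t+d)} x^(λ-1) (1-x)^(c-1) dx / B(λ, c)`. For `t = d` the upper limit is `1/2`, and when
`λ = c` the beta integrand is symmetric under `x ↦ 1 - x`, so this is half of `B(λ, λ)`.
-/

lemma Complex.ofReal_rpow_mul_one_sub_rpow {a b x : ℝ} (hx : x ∈ Icc (0:ℝ) 1) :
    ((x ^ (a - 1) * (1 - x) ^ (b - 1) : ℝ) : ℂ) =
      (x : ℂ) ^ ((a : ℂ) - 1) * (1 - (x : ℂ)) ^ ((b : ℂ) - 1) := by
  rw [Complex.ofReal_mul, Complex.ofReal_cpow hx.1, Complex.ofReal_cpow (sub_nonneg.2 hx.2)]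
  push_cast
  rfl

lemma Complex.betaIntegral_ofReal (a b : ℝ) :
    Complex.betaIntegral a b = ((∫ x in (0:ℝ)..1, x ^ (a - 1) * (1 - x) ^ (b - 1) : ℝ) : ℂ) := by
  rw [Complex.betaIntegral, ← intervalIntegral.integral_ofReal]
  refine intervalIntegral.integral_congr fun x hx => ?_
  rw [uIcc_of_le zero_le_one] at hx
  exact (Complex.ofReal_rpow_mul_one_sub_rpow hx).symm

lemma integral_rpow_mul_one_sub_rpow {a b : ℝ} (ha : 0 < a) (hb : 0 < b) :
    ∫ x in (0:ℝ)..1, x ^ (a - 1) * (1 - x) ^ (b - 1) = ProbabilityTheory.beta a b := by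
  rw [ProbabilityTheory.beta_eq_betaIntegralReal a b ha hb, Complex.betaIntegral_ofReal,
    Complex.ofReal_re]

lemma intervalIntegrable_rpow_mul_one_sub_rpow {a b : ℝ} (ha : 0 < a) (hb : 0 < b) :
    IntervalIntegrable (fun x : ℝ => x ^ (a - 1) * (1 - x) ^ (b - 1)) volume 0 1 := by
  have hC := Complex.betaIntegral_convergent (u := a) (v := b) (by simpa) (by simpa)
  rw [intervalIntegrable_iff_integrableOn_Ioc_of_le zero_le_one] at hC ⊢
  refine (show IntegrableOn _ _ _ from hC.re).congr_fun (fun x hx => ?_) measurableSet_Ioc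
  dsimp only
  rw [← Complex.ofReal_rpow_mul_one_sub_rpow (Ioc_subset_Icc_self hx)]
  exact Complex.ofReal_re _

lemma intervalIntegral.integral_left_half_of_symm {f : ℝ → ℝ} {a b : ℝ}
    (hf : IntervalIntegrable f volume a b) (hsymm : ∀ x, f (a + b - x) = f x) :
    ∫ x in a..(a + b) / 2, f x = (∫ x in a..b, f x) / 2 := by
  have hmid : (a + b) / 2 ∈ uIcc a b := by
    rcases le_total a b with h | h
    · rw [uIcc_of_le h]; constructor <;> linarith
    · rw [uIcc_of_ge h]; constructor <;> linarith
  have hmirror : ∫ x in a..(a + b) / 2, f x = ∫ x in (a + b) / 2..b, f x := calc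
    ∫ x in a..(a + b) / 2, f x = ∫ x in a..(a + b) / 2, f (a + b - x) := by simp only [hsymm]
    _ = ∫ x in (a + b) - (a + b) / 2..(a + b) - a, f x := integral_comp_sub_left _ _
    _ = ∫ x in (a + b) / 2..b, f x := by congr 1 <;> ring
  rw [← integral_add_adjacent_intervals (hf.mono_set (uIcc_subset_uIcc_left hmid))
    (hf.mono_set (uIcc_subset_uIcc_right hmid)), ← hmirror]
  ring

lemma integral_comp_div_one_sub {g : ℝ → ℝ} {d t : ℝ} (hd : 0 < d) (ht : 0 ≤ t) :
    ∫ Ψ in (0:ℝ)..t, g Ψ = ∫ x in (0:ℝ)..t / (t + d), d / (1 - x) ^ 2 * g (d * x / (1 - x)) := by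
  have hs : t / (t + d) < 1 := (div_lt_one (by positivity)).2 (by linarith)
  have hs₀ : 0 ≤ t / (t + d) := by positivity
  have hne : ∀ x ∈ Icc 0 (t / (t + d)), 1 - x ≠ 0 := fun x hx => by linarith [hx.2]
  have hcont : ContinuousOn (fun x => d * x / (1 - x)) (Icc 0 (t / (t + d))) :=
    (continuousOn_const.mul continuousOn_id).div (continuousOn_const.sub continuousOn_id) hne
  have hderiv : ∀ x ∈ Ioo 0 (t / (t + d)),
      HasDerivAt (fun x => d * x / (1 - x)) (d / (1 - x) ^ 2) x := fun x hx => by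
    refine (((hasDerivAt_id' x).const_mul d).div ((hasDerivAt_id' x).const_sub 1)
      (hne x (Ioo_subset_Icc_self hx))).congr_deriv ?_
    ring
  have key := integral_Icc_deriv_smul_of_deriv_nonneg (g := g) hcont hderiv
    (fun x _ => by positivity) hs₀
  have hend : d * (t / (t + d)) / (1 - t / (t + d)) = t := by
    have : t + d ≠ 0 := by positivity
    rw [one_sub_div this, add_sub_cancel_left]
    field_simp
  simp only [mul_zero, zero_div, hend, smul_eq_mul] at key
  rw [intervalIntegral.integral_of_le ht, intervalIntegral.integral_of_le hs₀,
    ← integral_Icc_eq_integral_Ioc, ← integral_Icc_eq_integral_Ioc, key]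

lemma div_one_sub_sq_mul_rpow_mul_one_add_rpow_eq {a b d x : ℝ} (hd : 0 < d) (hx₀ : 0 ≤ x)
    (hx₁ : x < 1) :
    d / (1 - x) ^ 2 * ((d * x / (1 - x)) ^ (a - 1) * (1 + d * x / (1 - x) / d) ^ (-(a + b))) =
      d ^ a * (x ^ (a - 1) * (1 - x) ^ (b - 1)) := by
  have hu : 0 < 1 - x := sub_pos.2 hx₁
  have hbase : 1 + d * x / (1 - x) / d = (1 - x)⁻¹ := by field_simp; ring
  have hsplit : (1 - x) ^ (a + b) = (1 - x) ^ (a - 1) * (1 - x) ^ (b - 1) * (1 - x) ^ 2 := by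
    rw [← rpow_add hu, ← rpow_natCast, ← rpow_add hu]; congr 1; push_cast; ring
  have hd_pow : d ^ a = d ^ (a - 1) * d := by
    rw [← rpow_add_one hd.ne']; ring_nf
  rw [hbase, inv_rpow hu.le, rpow_neg hu.le, inv_inv, div_rpow (by positivity) hu.le,
    mul_rpow hd.le hx₀, hsplit, hd_pow]
  have := (rpow_pos_of_pos hu (a - 1)).ne'
  field_simp

lemma ggPDF_eq_div_beta_mul (l c d Ψ : ℝ) :
    ggPDF l c d Ψ = (1 / d) ^ l / ProbabilityTheory.beta l c *
      (Ψ ^ (l - 1) * (1 + Ψ / d) ^ (-(l + c))) := by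
  rw [ggPDF, ProbabilityTheory.beta, div_div_eq_mul_div]
  ring

theorem integral_ggPDF_eq {l c d t : ℝ} (hd : 0 < d) (ht : 0 ≤ t) :
    ∫ Ψ in (0:ℝ)..t, ggPDF l c d Ψ =
      (∫ x in (0:ℝ)..t / (t + d), x ^ (l - 1) * (1 - x) ^ (c - 1)) /
        ProbabilityTheory.beta l c := by
  have hs : t / (t + d) < 1 := (div_lt_one (by positivity)).2 (by linarith)
  have hsubst : ∫ Ψ in (0:ℝ)..t, Ψ ^ (l - 1) * (1 + Ψ / d) ^ (-(l + c)) =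
      d ^ l * ∫ x in (0:ℝ)..t / (t + d), x ^ (l - 1) * (1 - x) ^ (c - 1) := by
    rw [integral_comp_div_one_sub hd ht, ← intervalIntegral.integral_const_mul]
    refine intervalIntegral.integral_congr fun x hx => ?_
    rw [uIcc_of_le (by positivity)] at hx
    exact div_one_sub_sq_mul_rpow_mul_one_add_rpow_eq hd hx.1 (hx.2.trans_lt hs)
  have hd_pow : (1 / d) ^ l * d ^ l = 1 := by
    rw [one_div, inv_rpow hd.le, inv_mul_cancel₀ (rpow_pos_of_pos hd l).ne']
  simp only [ggPDF_eq_div_beta_mul]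
  rw [intervalIntegral.integral_const_mul, hsubst, div_mul_eq_mul_div, ← mul_assoc, hd_pow,
    one_mul]

/-- The median of the `GG(λ, c, d)` distribution equals `d` whenever `λ = c`:
`∫₀^d g(Ψ) dΨ = 1/2` for the `GG(λ, λ, d)` density `g`. -/
theorem stmt8 (l d : ℝ) (hl : 0 < l) (hd : 0 < d) :
    ∫ Ψ in (0:ℝ)..d, ggPDF l l d Ψ = 1 / 2 := by
  have hhalf : d / (d + d) = (0 + 1) / 2 := by field_simp; ring
  have hsymm : ∀ x : ℝ, (0 + 1 - x) ^ (l - 1) * (1 - (0 + 1 - x)) ^ (l - 1) =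
      x ^ (l - 1) * (1 - x) ^ (l - 1) := fun x => by
    rw [zero_add, sub_sub_cancel, mul_comm]
  rw [integral_ggPDF_eq hd hd.le, hhalf, intervalIntegral.integral_left_half_of_symm
    (intervalIntegrable_rpow_mul_one_sub_rpow hl hl) hsymm,
    integral_rpow_mul_one_sub_rpow hl hl]
  field_simp [(ProbabilityTheory.beta_pos hl hl).ne']
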